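/- The basis φ₀,…,φ₅ of P(D) for the undeformed DGR system is equivariant under the ℤ/6-action: for every ρ ∈ ℂ with ρ⁶ = 1, substituting (q,Q,p,P) ↦ (ρ²q, ρ²Q, ρ³p, ρ³P) yields φ₀ ↦ φ₀, φ₁ ↦ ρ²φ₁, φ₂ ↦ ρ⁵φ₂, φ₃ ↦ φ₃, φ₄ ↦ ρ²φ₄ and φ₅ ↦ ρ³φ₅. -/
import Mathlib


/-- The basis φ₀,…,φ₅ of P(D) for the undeformed DGR system. -/
noncomputable def φ₀ (q Q p P : ℂ) : ℂ := 1
noncomputable def φ₁ (q Q p P : ℂ) : ℂ := Q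
noncomputable def φ₂ (q Q p P : ℂ) : ℂ := Q * p + (2/3 : ℂ) * q * P + (1/3 : ℂ) * Q * P
noncomputable def φ₃ (q Q p P : ℂ) : ℂ := (9/2 : ℂ) * q * Q ^ 2 - (9/2 : ℂ) * Q ^ 3 + P ^ 2
noncomputable def φ₄ (q Q p P : ℂ) : ℂ :=
  q ^ 2 * Q ^ 2 - (1/2 : ℂ) * q * Q ^ 3 - (1/2 : ℂ) * Q ^ 4 - (2/3 : ℂ) * Q * p * P
    - (2/9 : ℂ) * q * P ^ 2 - (1/9 : ℂ) * Q * P ^ 2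
noncomputable def φ₅ (q Q p P : ℂ) : ℂ :=
  (3/2 : ℂ) * q * Q ^ 2 * p + 2 * q ^ 2 * Q * P + (1/2 : ℂ) * q * Q ^ 2 * P
    - Q ^ 3 * P - (1/3 : ℂ) * p * P ^ 2 + (1/9 : ℂ) * P ^ 3

/-- the basis φ₀,…,φ₅ of P(D) is equivariant under the ℤ/6-action
(q,Q,p,P) ↦ (ρ²q, ρ²Q, ρ³p, ρ³P), with weights 0, 2, 5, 0, 2, 3. -/
theorem basis_Z6_equivariant (ρ : ℂ) (hρ : ρ ^ 6 = 1) (q Q p P : ℂ) :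
    φ₀ (ρ^2*q) (ρ^2*Q) (ρ^3*p) (ρ^3*P) = φ₀ q Q p P ∧
    φ₁ (ρ^2*q) (ρ^2*Q) (ρ^3*p) (ρ^3*P) = ρ ^ 2 * φ₁ q Q p P ∧
    φ₂ (ρ^2*q) (ρ^2*Q) (ρ^3*p) (ρ^3*P) = ρ ^ 5 * φ₂ q Q p P ∧
    φ₃ (ρ^2*q) (ρ^2*Q) (ρ^3*p) (ρ^3*P) = φ₃ q Q p P ∧
    φ₄ (ρ^2*q) (ρ^2*Q) (ρ^3*p) (ρ^3*P) = ρ ^ 2 * φ₄ q Q p P ∧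
    φ₅ (ρ^2*q) (ρ^2*Q) (ρ^3*p) (ρ^3*P) = ρ ^ 3 * φ₅ q Q p P := by
  refine ⟨rfl, by unfold φ₁; ring, by unfold φ₂; ring, ?_, ?_, ?_⟩
  · unfold φ₃
    linear_combination ((9/2 : ℂ) * q * Q ^ 2 - (9/2 : ℂ) * Q ^ 3 + P ^ 2) * hρ
  · unfold φ₄
    linear_combination (ρ^2 * (q ^ 2 * Q ^ 2 - (1/2 : ℂ) * q * Q ^ 3 - (1/2 : ℂ) * Q ^ 4 - (2/3 : ℂ) * Q * p * P - (2/9 : ℂ) * q * P ^ 2 - (1/9 : ℂ) * Q * P ^ 2)) * hρ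
  · unfold φ₅
    linear_combination (ρ^3 * ((3/2 : ℂ) * q * Q ^ 2 * p + 2 * q ^ 2 * Q * P + (1/2 : ℂ) * q * Q ^ 2 * P - Q ^ 3 * P - (1/3 : ℂ) * p * P ^ 2 + (1/9 : ℂ) * P ^ 3)) * hρ
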